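/- Let w : ℕ × ℕ → [0,∞) satisfy: (a) for each u ∈ ℕ the sequence (w(u,k))_{k∈ℕ} tends to 0, and (b) C := sup_{u∈ℕ} Σ_{k=1}^∞ w(k,u) < ∞. Then T(x_n) := (Σ_{n=1}^∞ x_n · w(n,u))_{u∈ℕ} defines a positive, order continuous bounded linear operator on ℓ∞ which maps c₀ into c₀, and both T and its restriction to c₀ have operator norm equal to C. -/

import Mathlib

/-!
Each coordinate of `T x` is a series `∑ₙ xₙ vₙ` against a summable nonnegative weight
`vₙ = w(n, u)`, so `|(T x)_u| ≤ ‖x‖ ∑ₙ w(n, u) ≤ C ‖x‖`; testing `T` on the indicators of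
`{0, …, N - 1}`, which lie in `c₀` and have norm at most `1`, shows that `C` is attained,
for `T` and for its restriction to `c₀` alike.

Order continuity is Tannery's theorem (dominated convergence for series, along an arbitrary
filter) applied to the net: a decreasing net with infimum `0` converges to `0` coordinatewise,
and it is dominated by any of its members. For `x ∈ c₀`, split `(T x)_u` at an index `N` beyond
which `|xₙ| ≤ ε`: the tail is at most `ε C`, and the finitely many remaining terms tend to `0`
as `u → ∞` by (a).
-/

open Filter BoundedContinuousFunction ZeroAtInftyContinuousMap
open scoped ZeroAtInfty

/-- A bounded linear operator `S` on `ℓ∞` (modelled as `ℕ →ᵇ ℝ`) is order continuous if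
for every decreasing net in `ℓ∞` with infimum `0` the image net has infimum `0`. -/
def IsOrderContinuousOp (S : (ℕ →ᵇ ℝ) →L[ℝ] (ℕ →ᵇ ℝ)) : Prop :=
  ∀ (ι : Type) (p : Preorder ι), Nonempty ι →
    (∀ i j : ι, ∃ k : ι, p.le i k ∧ p.le j k) →
    ∀ x : ι → (ℕ →ᵇ ℝ), (∀ i j : ι, p.le i j → x j ≤ x i) →
      IsGLB (Set.range x) 0 → IsGLB (Set.range fun i => S (x i)) 0

open Topology

section WeightedSeries

variable {v x : ℕ → ℝ} {M : ℝ}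

theorem norm_mul_le_of_abs_le {a b M : ℝ} (hb : 0 ≤ b) (ha : |a| ≤ M) : ‖a * b‖ ≤ M * b := by
  rw [Real.norm_eq_abs, abs_mul, abs_of_nonneg hb]
  exact mul_le_mul_of_nonneg_right ha hb

theorem summable_mul_of_abs_le (hv : ∀ n, 0 ≤ v n) (hvs : Summable v) (hx : ∀ n, |x n| ≤ M) :
    Summable fun n => x n * v n :=
  (hvs.mul_left M).of_norm_bounded fun n => norm_mul_le_of_abs_le (hv n) (hx n)

theorem abs_tsum_mul_le (hv : ∀ n, 0 ≤ v n) (hvs : Summable v) (hx : ∀ n, |x n| ≤ M) :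
    |∑' n, x n * v n| ≤ M * ∑' n, v n :=
  tsum_of_norm_bounded (f := fun n => x n * v n) (hvs.hasSum.mul_left M) fun n =>
    norm_mul_le_of_abs_le (hv n) (hx n)

theorem abs_tsum_mul_le_of_forall_ge (hv : ∀ n, 0 ≤ v n) (hvs : Summable v)
    (hx : ∀ n, |x n| ≤ M) {N : ℕ} {ε : ℝ} (hxN : ∀ n ≥ N, |x n| ≤ ε) :
    |∑' n, x n * v n| ≤ M * ∑ n ∈ Finset.range N, v n + ε * ∑' n, v n := by
  have hshift : Summable fun n => v (n + N) := (summable_nat_add_iff N).2 hvs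
  have hhead : |∑ n ∈ Finset.range N, x n * v n| ≤ M * ∑ n ∈ Finset.range N, v n := by
    rw [Finset.mul_sum]
    exact (norm_sum_le _ _).trans (Finset.sum_le_sum fun n _ => norm_mul_le_of_abs_le (hv n) (hx n))
  have htail : |∑' n, x (n + N) * v (n + N)| ≤ ε * ∑' n, v n := by
    refine (abs_tsum_mul_le (fun n => hv _) hshift fun n => hxN _ (N.le_add_left n)).trans ?_
    refine mul_le_mul_of_nonneg_left ?_ ((abs_nonneg _).trans (hxN N le_rfl))
    rw [← hvs.sum_add_tsum_nat_add N]
    exact le_add_of_nonneg_left (Finset.sum_nonneg fun n _ => hv n)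
  rw [← (summable_mul_of_abs_le hv hvs hx).sum_add_tsum_nat_add N]
  exact (abs_add_le _ _).trans (add_le_add hhead htail)

end WeightedSeries

noncomputable def finsetIndicator (s : Finset ℕ) : C₀(ℕ, ℝ) where
  toFun := Set.indicator (s : Set ℕ) 1
  continuous_toFun := continuous_of_discreteTopology
  zero_at_infty' := HasCompactSupport.is_zero_at_infty <|
    HasCompactSupport.intro s.finite_toSet.isCompact fun _ hn => Set.indicator_of_notMem hn _

theorem finsetIndicator_apply (s : Finset ℕ) (n : ℕ) :
    finsetIndicator s n = Set.indicator (s : Set ℕ) 1 n :=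
  rfl

theorem norm_finsetIndicator_le (s : Finset ℕ) : ‖finsetIndicator s‖ ≤ 1 := by
  rw [← ZeroAtInftyContinuousMap.norm_toBCF_eq_norm]
  refine (norm_le zero_le_one).2 fun n => ?_
  by_cases hn : n ∈ s <;> simp [finsetIndicator_apply, hn]

theorem BoundedContinuousFunction.abs_apply_le_norm {α : Type*} [TopologicalSpace α]
    (x : α →ᵇ ℝ) (a : α) : |x a| ≤ ‖x‖ :=
  x.norm_coe_le_norm a

theorem isGLB_range_apply {ι : Type*} {x : ι → ℕ →ᵇ ℝ} (h : IsGLB (Set.range x) 0) (n : ℕ) :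
    IsGLB (Set.range fun i => x i n) 0 := by
  refine ⟨?_, fun b hb => ?_⟩
  · rintro _ ⟨i, rfl⟩
    exact h.1 ⟨i, rfl⟩ n
  · have hle : max b 0 • (finsetIndicator {n}).toBCF ≤ 0 := h.2 <| by
      rintro _ ⟨i, rfl⟩ m
      change max b 0 * finsetIndicator {n} m ≤ x i m
      by_cases hm : m = n
      · subst hm
        simpa [finsetIndicator_apply] using max_le (hb ⟨i, rfl⟩) (h.1 ⟨i, rfl⟩ m)
      · simpa [finsetIndicator_apply, hm] using h.1 ⟨i, rfl⟩ m
    simpa [finsetIndicator_apply] using hle n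

theorem isGLB_range_of_tendsto {α ι : Type*} [TopologicalSpace α] {F : Filter ι} [F.NeBot]
    {y : ι → α →ᵇ ℝ} (hy : ∀ i, 0 ≤ y i) (h : ∀ a, Tendsto (fun i => y i a) F (𝓝 0)) :
    IsGLB (Set.range y) 0 := by
  refine ⟨?_, fun b hb a => ?_⟩
  · rintro _ ⟨i, rfl⟩
    exact hy i
  · exact ge_of_tendsto' (h a) fun i => hb ⟨i, rfl⟩ a

def IsKernelOperator (w : ℕ × ℕ → ℝ) (T : (ℕ →ᵇ ℝ) →L[ℝ] (ℕ →ᵇ ℝ)) : Prop :=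
  ∀ (x : ℕ →ᵇ ℝ) (u : ℕ), T x u = ∑' n : ℕ, x n * w (n, u)

section KernelOperator

variable {w : ℕ × ℕ → ℝ} {C : ℝ}

theorem abs_tsum_mul_kernel_le (hw : ∀ q, 0 ≤ w q) (hsum : ∀ u, Summable fun k => w (k, u))
    (hC : ∀ u, ∑' k, w (k, u) ≤ C) (x : ℕ →ᵇ ℝ) (u : ℕ) :
    |∑' n, x n * w (n, u)| ≤ C * ‖x‖ := by
  refine (abs_tsum_mul_le (fun n => hw _) (hsum u) (abs_apply_le_norm x)).trans ?_
  rw [mul_comm C]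
  exact mul_le_mul_of_nonneg_left (hC u) (norm_nonneg x)

theorem exists_isKernelOperator (hw : ∀ q, 0 ≤ w q) (hsum : ∀ u, Summable fun k => w (k, u))
    (hbdd : BddAbove (Set.range fun u => ∑' k, w (k, u))) : ∃ T, IsKernelOperator w T := by
  obtain ⟨C, hC⟩ := hbdd
  have hC' : ∀ u, ∑' k, w (k, u) ≤ C := fun u => hC ⟨u, rfl⟩
  have hC0 : 0 ≤ C := (tsum_nonneg fun k => hw _).trans (hC' 0)
  have hsx (x : ℕ →ᵇ ℝ) (u : ℕ) : Summable fun n => x n * w (n, u) :=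
    summable_mul_of_abs_le (fun n => hw _) (hsum u) (abs_apply_le_norm x)
  let f (x : ℕ →ᵇ ℝ) : ℕ →ᵇ ℝ := ofNormedAddCommGroupDiscrete (fun u => ∑' n, x n * w (n, u))
    (C * ‖x‖) (abs_tsum_mul_kernel_le hw hsum hC' x)
  let L : (ℕ →ᵇ ℝ) →ₗ[ℝ] (ℕ →ᵇ ℝ) :=
    { toFun := f
      map_add' := fun x y => by
        ext u
        change ∑' n, (x n + y n) * w (n, u) = ∑' n, x n * w (n, u) + ∑' n, y n * w (n, u)
        simpa only [add_mul] using (hsx x u).tsum_add (hsx y u)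
      map_smul' := fun c x => by
        ext u
        change ∑' n, c * x n * w (n, u) = c * ∑' n, x n * w (n, u)
        simpa only [mul_assoc] using tsum_mul_left }
  exact ⟨L.mkContinuous C fun x => norm_ofNormedAddCommGroup_le _ (by positivity)
    (abs_tsum_mul_kernel_le hw hsum hC' x), fun x u => rfl⟩

end KernelOperator

namespace IsKernelOperator

variable {w : ℕ × ℕ → ℝ} {T : (ℕ →ᵇ ℝ) →L[ℝ] (ℕ →ᵇ ℝ)} {C : ℝ}

theorem nonneg (hT : IsKernelOperator w T) (hw : ∀ q, 0 ≤ w q) {x : ℕ →ᵇ ℝ} (hx : 0 ≤ x) :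
    0 ≤ T x := fun u =>
  (tsum_nonneg fun n => mul_nonneg (hx n) (hw _)).trans_eq (hT x u).symm

theorem norm_apply_le (hT : IsKernelOperator w T) (hw : ∀ q, 0 ≤ w q)
    (hsum : ∀ u, Summable fun k => w (k, u)) (hC : ∀ u, ∑' k, w (k, u) ≤ C) (x : ℕ →ᵇ ℝ) :
    ‖T x‖ ≤ C * ‖x‖ := by
  have hC0 : 0 ≤ C := (tsum_nonneg fun k => hw _).trans (hC 0)
  refine (norm_le (by positivity)).2 fun u => ?_
  rw [Real.norm_eq_abs, hT]
  exact abs_tsum_mul_kernel_le hw hsum hC x u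

theorem sum_le_norm_apply_finsetIndicator (hT : IsKernelOperator w T) (s : Finset ℕ) (u : ℕ) :
    ∑ k ∈ s, w (k, u) ≤ ‖T (finsetIndicator s).toBCF‖ := by
  have hval : T (finsetIndicator s).toBCF u = ∑ k ∈ s, w (k, u) := by
    rw [hT]
    simp only [toBCF_apply, finsetIndicator_apply, Set.indicator_apply, SetLike.mem_coe,
      Pi.one_apply, ite_mul, one_mul, zero_mul]
    rw [tsum_eq_sum fun n hn => if_neg hn]
    exact Finset.sum_congr rfl fun n hn => if_pos hn
  rw [← hval]
  exact (le_abs_self _).trans (abs_apply_le_norm _ u)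

theorem iSup_tsum_le (hT : IsKernelOperator w T) (hsum : ∀ u, Summable fun k => w (k, u))
    {B : ℝ} (hB : ∀ N, ‖T (finsetIndicator (Finset.range N)).toBCF‖ ≤ B) :
    ⨆ u, ∑' k, w (k, u) ≤ B :=
  ciSup_le fun u => (hsum u).tsum_le_of_sum_range_le fun N =>
    (hT.sum_le_norm_apply_finsetIndicator _ u).trans (hB N)

theorem opNorm_eq (hT : IsKernelOperator w T) (hw : ∀ q, 0 ≤ w q)
    (hsum : ∀ u, Summable fun k => w (k, u))
    (hbdd : BddAbove (Set.range fun u => ∑' k, w (k, u))) :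
    ‖T‖ = ⨆ u, ∑' k, w (k, u) := by
  have hC : ∀ u, ∑' k, w (k, u) ≤ ⨆ u, ∑' k, w (k, u) := le_ciSup hbdd
  refine le_antisymm (T.opNorm_le_bound ((tsum_nonneg fun k => hw _).trans (hC 0))
    (hT.norm_apply_le hw hsum hC)) (hT.iSup_tsum_le hsum fun N => ?_)
  refine (T.le_opNorm_of_le ?_).trans_eq (mul_one _)
  rw [norm_toBCF_eq_norm]
  exact norm_finsetIndicator_le _

theorem opNorm_eq_of_toBCF_apply (hT : IsKernelOperator w T) (hw : ∀ q, 0 ≤ w q)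
    (hsum : ∀ u, Summable fun k => w (k, u))
    (hbdd : BddAbove (Set.range fun u => ∑' k, w (k, u)))
    {T₀ : C₀(ℕ, ℝ) →L[ℝ] C₀(ℕ, ℝ)} (hT₀ : ∀ x, (T₀ x).toBCF = T x.toBCF) :
    ‖T₀‖ = ⨆ u, ∑' k, w (k, u) := by
  have hC : ∀ u, ∑' k, w (k, u) ≤ ⨆ u, ∑' k, w (k, u) := le_ciSup hbdd
  refine le_antisymm (T₀.opNorm_le_bound ((tsum_nonneg fun k => hw _).trans (hC 0))
    fun x => ?_) (hT.iSup_tsum_le hsum fun N => ?_)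
  · rw [← norm_toBCF_eq_norm, hT₀, ← norm_toBCF_eq_norm (f := x)]
    exact hT.norm_apply_le hw hsum hC _
  · rw [← hT₀, norm_toBCF_eq_norm]
    exact (T₀.le_opNorm_of_le (norm_finsetIndicator_le _)).trans_eq (mul_one _)

theorem tendsto_apply_atTop (hT : IsKernelOperator w T) (hw : ∀ q, 0 ≤ w q)
    (hsum : ∀ u, Summable fun k => w (k, u))
    (ha : ∀ n, Tendsto (fun u => w (n, u)) atTop (𝓝 0)) (hC : ∀ u, ∑' k, w (k, u) ≤ C)
    {x : ℕ →ᵇ ℝ} (hx : Tendsto (fun n => x n) atTop (𝓝 0)) :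
    Tendsto (fun u => T x u) atTop (𝓝 0) := by
  have hC0 : 0 ≤ C := (tsum_nonneg fun k => hw _).trans (hC 0)
  have key : ∀ ε > 0, ∀ᶠ u in atTop, |T x u| ≤ ε * (1 + C) := by
    intro ε hε
    obtain ⟨N, hN⟩ := eventually_atTop.1 (NormedAddGroup.tendsto_nhds_zero.1 hx ε hε)
    have hhead : Tendsto (fun u => ‖x‖ * ∑ n ∈ Finset.range N, w (n, u)) atTop (𝓝 0) := by
      simpa using (tendsto_finsetSum _ fun n _ => ha n).const_mul ‖x‖
    filter_upwards [hhead.eventually_lt_const hε] with u hu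
    rw [hT]
    calc |∑' n, x n * w (n, u)|
        ≤ ‖x‖ * ∑ n ∈ Finset.range N, w (n, u) + ε * ∑' n, w (n, u) :=
          abs_tsum_mul_le_of_forall_ge (fun n => hw _) (hsum u) (abs_apply_le_norm x)
            fun n hn => (hN n hn).le
      _ ≤ ε + ε * C := add_le_add hu.le (mul_le_mul_of_nonneg_left (hC u) hε.le)
      _ = ε * (1 + C) := by ring
  refine NormedAddGroup.tendsto_nhds_zero.2 fun ε hε => ?_
  filter_upwards [key (ε / 2 / (1 + C)) (by positivity)] with u hu
  calc ‖T x u‖ ≤ ε / 2 / (1 + C) * (1 + C) := hu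
    _ = ε / 2 := div_mul_cancel₀ _ (by positivity)
    _ < ε := half_lt_self hε

theorem tendsto_apply_of_tendsto (hT : IsKernelOperator w T) (hw : ∀ q, 0 ≤ w q)
    (hsum : ∀ u, Summable fun k => w (k, u)) {ι : Type*} {F : Filter ι} {x : ι → ℕ →ᵇ ℝ}
    {M : ℝ} (hx : ∀ n, Tendsto (fun i => x i n) F (𝓝 0)) (hM : ∀ᶠ i in F, ∀ n, |x i n| ≤ M)
    (u : ℕ) : Tendsto (fun i => T (x i) u) F (𝓝 0) := by
  refine Tendsto.congr (fun i => (hT (x i) u).symm) ?_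
  simpa only [tsum_zero] using tendsto_tsum_of_dominated_convergence
    (f := fun i n => x i n * w (n, u)) (g := fun _ => 0) ((hsum u).mul_left M)
    (fun n => by simpa using (hx n).mul_const (w (n, u)))
    (hM.mono fun i hi n => norm_mul_le_of_abs_le (hw _) (hi n))

theorem isOrderContinuousOp (hT : IsKernelOperator w T) (hw : ∀ q, 0 ≤ w q)
    (hsum : ∀ u, Summable fun k => w (k, u)) : IsOrderContinuousOp T := by
  intro ι p hne hdir x hanti hglb
  let _ : Preorder ι := p
  have : IsDirectedOrder ι := ⟨hdir⟩
  obtain ⟨i₀⟩ := id hne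
  have hx0 : ∀ i, 0 ≤ x i := fun i => hglb.1 ⟨i, rfl⟩
  refine isGLB_range_of_tendsto (F := atTop) (fun i => hT.nonneg hw (hx0 i))
    (hT.tendsto_apply_of_tendsto hw hsum (M := ‖x i₀‖)
      (fun n => tendsto_atTop_isGLB (fun i j hij => hanti i j hij n) (isGLB_range_apply hglb n))
      ?_)
  filter_upwards [eventually_ge_atTop i₀] with i hi n
  rw [abs_of_nonneg (show 0 ≤ x i n from hx0 i n)]
  exact (hanti _ _ hi n).trans ((le_abs_self _).trans (abs_apply_le_norm _ n))

end IsKernelOperator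

theorem c0_graph_defines_operator
    (w : ℕ × ℕ → ℝ) (hw : ∀ q : ℕ × ℕ, 0 ≤ w q)
    (ha : ∀ u : ℕ, Tendsto (fun k : ℕ => w (u, k)) atTop (nhds 0))
    (hsum : ∀ u : ℕ, Summable fun k : ℕ => w (k, u))
    (hbdd : BddAbove (Set.range fun u : ℕ => ∑' k : ℕ, w (k, u)))
    (C : ℝ) (hC : C = ⨆ u : ℕ, ∑' k : ℕ, w (k, u)) :
    ∃ T : (ℕ →ᵇ ℝ) →L[ℝ] (ℕ →ᵇ ℝ),
      (∀ (x : ℕ →ᵇ ℝ) (u : ℕ), T x u = ∑' n : ℕ, x n * w (n, u)) ∧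
      (∀ x : ℕ →ᵇ ℝ, 0 ≤ x → 0 ≤ T x) ∧
      IsOrderContinuousOp T ∧
      (∀ x : ℕ →ᵇ ℝ, Tendsto (fun n : ℕ => x n) atTop (nhds 0) →
        Tendsto (fun n : ℕ => T x n) atTop (nhds 0)) ∧
      ‖T‖ = C ∧
      (∀ T₀ : C₀(ℕ, ℝ) →L[ℝ] C₀(ℕ, ℝ),
        (∀ x : C₀(ℕ, ℝ), (T₀ x).toBCF = T x.toBCF) → ‖T₀‖ = C) := by
  obtain ⟨T, hT⟩ := exists_isKernelOperator hw hsum hbdd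
  subst hC
  exact ⟨T, hT, fun x => hT.nonneg hw, hT.isOrderContinuousOp hw hsum,
    fun x => hT.tendsto_apply_atTop hw hsum ha (le_ciSup hbdd), hT.opNorm_eq hw hsum hbdd,
    fun T₀ => hT.opNorm_eq_of_toBCF_apply hw hsum hbdd⟩
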